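/- Order preservation of the Version 1 dynamics (core of Lemma 'inBet'): assume 1 − τρ̄′(z)z > 0 for all z ∈ ℝ. Let (Eₙ) and (E′ₙ) be two trajectories of the Version 1 dynamics driven by the same orders (x₀,…,x_N), i.e. Eₙ⁺ = Eₙ + xₙ, E_{n+1} = ā(Eₙ⁺)Eₙ⁺ and likewise for E′. If E′₀ ≤ E₀, then E′ₙ ≤ Eₙ and E′ₙ⁺ ≤ Eₙ⁺ for all n ∈ {0,…,N}. -/

import Mathlib

open Real

/-- Version 1 dynamics with a general initial value `e₀`:
`E₀ = e₀`, `E_{n+1} = exp(−τρ̄(Eₙ + xₙ))·(Eₙ + xₙ)`. -/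
noncomputable def EvI (τ : ℝ) (ρ : ℝ → ℝ) (x : ℕ → ℝ) (e₀ : ℝ) : ℕ → ℝ
  | 0 => e₀
  | n + 1 =>
      Real.exp (-(τ * ρ (EvI τ ρ x e₀ n + x n))) * (EvI τ ρ x e₀ n + x n)

lemma hasDerivAt_exp_neg_mul_mul_self {τ : ℝ} {ρ : ℝ → ℝ} {ρ' z : ℝ}
    (hρ : HasDerivAt ρ ρ' z) :
    HasDerivAt (fun z => exp (-(τ * ρ z)) * z) (exp (-(τ * ρ z)) * (1 - τ * ρ' * z)) z := by
  have hexp : HasDerivAt (fun z => exp (-(τ * ρ z))) (exp (-(τ * ρ z)) * -(τ * ρ')) z :=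
    (hρ.const_mul τ).neg.exp
  exact (hexp.fun_mul (hasDerivAt_id' z)).congr_deriv (by ring)

lemma strictMono_exp_neg_mul_mul_self {τ : ℝ} {ρ : ℝ → ℝ} (hρ : Differentiable ℝ ρ)
    (h : ∀ z, 0 < 1 - τ * deriv ρ z * z) :
    StrictMono fun z => exp (-(τ * ρ z)) * z := by
  refine strictMono_of_deriv_pos fun z => ?_
  rw [(hasDerivAt_exp_neg_mul_mul_self (hρ z).hasDerivAt).deriv]
  exact mul_pos (exp_pos _) (h z)

lemma monotone_EvI {τ : ℝ} {ρ : ℝ → ℝ} (x : ℕ → ℝ)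
    (hstep : Monotone fun z => exp (-(τ * ρ z)) * z) (n : ℕ) :
    Monotone fun e₀ => EvI τ ρ x e₀ n := by
  induction n with
  | zero => exact fun _ _ he => he
  | succ n ih => exact fun _ _ he => hstep (add_le_add_left (ih he) (x n))

theorem version1_dynamics_order_preserving_general
    (τ : ℝ) (ρ : ℝ → ℝ) (hρ : ContDiff ℝ 1 ρ)
    (h : ∀ z : ℝ, 0 < 1 - τ * deriv ρ z * z)
    (N : ℕ) (x : ℕ → ℝ)
    (e₀ e₀' : ℝ) (he : e₀' ≤ e₀) :
    ∀ n ≤ N, EvI τ ρ x e₀' n ≤ EvI τ ρ x e₀ n ∧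
      EvI τ ρ x e₀' n + x n ≤ EvI τ ρ x e₀ n + x n := by
  intro n _
  have hstep := (strictMono_exp_neg_mul_mul_self (hρ.differentiable one_ne_zero) h).monotone
  have hE := monotone_EvI x hstep n he
  exact ⟨hE, add_le_add_left hE (x n)⟩

/-- Order preservation of the Version 1 dynamics: if `1 − τρ̄′(z)z > 0` for all `z`,
two trajectories driven by the same orders preserve their initial order:
`E′₀ ≤ E₀` implies `E′ₙ ≤ Eₙ` and `E′ₙ + xₙ ≤ Eₙ + xₙ` for all `n ≤ N`. -/
theorem version1_dynamics_order_preserving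
    (τ : ℝ) (hτ : 0 < τ) (ρ : ℝ → ℝ) (hρ : ContDiff ℝ 1 ρ)
    (h : ∀ z : ℝ, 0 < 1 - τ * deriv ρ z * z)
    (N : ℕ) (hN : 1 ≤ N) (x : ℕ → ℝ)
    (e₀ e₀' : ℝ) (he : e₀' ≤ e₀) :
    ∀ n ≤ N, EvI τ ρ x e₀' n ≤ EvI τ ρ x e₀ n ∧
      EvI τ ρ x e₀' n + x n ≤ EvI τ ρ x e₀ n + x n :=
  version1_dynamics_order_preserving_general τ ρ hρ h N x e₀ e₀' he
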